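/- For the wheel $W_4$ (a 4-cycle plus a hub adjacent to all four cycle vertices, order 5), $rx_3(W_4) = 3$. -/

import Mathlib

open SimpleGraph

/-- An edge-coloring `c` is a `k`-rainbow coloring of `G` if every `k`-set of vertices
is contained in a rainbow tree: a subgraph of `G` that is a tree, contains the `k` vertices,
and whose edges receive pairwise distinct colors. -/
def IsRainbowColoring {V : Type*} [Fintype V] (G : SimpleGraph V) {α : Type*}
    (c : Sym2 V → α) (k : ℕ) : Prop :=
  ∀ S : Finset V, S.card = k →
    ∃ T : G.Subgraph, (↑S : Set V) ⊆ T.verts ∧ T.coe.IsTree ∧ Set.InjOn c T.edgeSet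

/-- The `k`-rainbow index of `G`: the minimum number of colors in a `k`-rainbow coloring. -/
noncomputable def rxk {V : Type*} [Fintype V] (G : SimpleGraph V) (k : ℕ) : ℕ :=
  sInf {q | ∃ c : Sym2 V → Fin q, IsRainbowColoring G c k}

/-- The wheel `W₄`: the 4-cycle `0 1 2 3 0` together with a hub `4` joined to all of them. -/
def wheel4 : SimpleGraph (Fin 5) :=
  SimpleGraph.fromEdgeSet
    {s(0, 1), s(1, 2), s(2, 3), s(3, 0), s(4, 0), s(4, 1), s(4, 2), s(4, 3)}

/-!
A rainbow tree with at most two colours has at most two edges, hence at most three vertices; so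
with two colours the rainbow tree of a 3-set `S` spans exactly `S`, and the edges of `W₄` inside
every 3-set must carry both colours. Conversely a 2-edge path inside `S` whose two edges have
different colours is a rainbow tree for `S`, and `wheel4Coloring` has such a path in every 3-set.
-/

namespace SimpleGraph

variable {V : Type*} {G : SimpleGraph V}

theorem Subgraph.natCard_edgeSet_coe (H : G.Subgraph) :
    Nat.card H.coe.edgeSet = H.edgeSet.ncard := by
  rw [← H.image_coe_edgeSet_coe, Set.ncard_image_of_injective _
    (Sym2.map.injective Subtype.val_injective), Nat.card_coe_set_eq]

theorem Subgraph.isTree_coe_iff {H : G.Subgraph} [Finite H.verts] :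
    H.coe.IsTree ↔ H.Connected ∧ H.edgeSet.ncard + 1 = H.verts.ncard := by
  rw [isTree_iff_connected_and_card, natCard_edgeSet_coe, Nat.card_coe_set_eq,
    Subgraph.connected_iff']

theorem Walk.IsPath.isTree_coe_toSubgraph {u v : V} {p : G.Walk u v} (hp : p.IsPath) :
    p.toSubgraph.coe.IsTree := by
  classical
  have : Finite p.toSubgraph.verts := by rw [verts_toSubgraph]; exact p.support.finite_toSet
  refine Subgraph.isTree_coe_iff.mpr ⟨p.toSubgraph_connected, ?_⟩
  rw [edgeSet_toSubgraph, verts_toSubgraph, Walk.edgeSet, ← List.coe_toFinset,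
    ← List.coe_toFinset, Set.ncard_coe_finset, Set.ncard_coe_finset,
    List.toFinset_card_of_nodup hp.isTrail.edges_nodup,
    List.toFinset_card_of_nodup hp.support_nodup, length_edges, length_support]

theorem exists_rainbow_tree_of_adj_of_adj {α : Type*} {c : Sym2 V → α} {a b d : V}
    (hab : G.Adj a b) (hbd : G.Adj b d) (had : a ≠ d) (hc : c s(a, b) ≠ c s(b, d)) :
    ∃ T : G.Subgraph, {a, b, d} ⊆ T.verts ∧ T.coe.IsTree ∧ Set.InjOn c T.edgeSet := by
  let p : G.Walk a d := .cons hab (.cons hbd .nil)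
  have hp : p.IsPath := by simp [p, had, hab.ne, hbd.ne]
  refine ⟨p.toSubgraph, by simp [p, Set.subset_def], hp.isTree_coe_toSubgraph, ?_⟩
  have hedges : p.edgeSet = {s(a, b), s(b, d)} := by ext; simp [p]
  rw [Walk.edgeSet_toSubgraph, hedges]
  exact Set.injOn_pair.mpr (absurd · hc)

theorem IsRainbowColoring.nontrivial_image_edgeSet_inter_sym2 [Fintype V] {q : ℕ} (hq : q ≤ 2)
    {c : Sym2 V → Fin q} (hc : IsRainbowColoring G c 3) {S : Finset V} (hS : S.card = 3) :
    (c '' (G.edgeSet ∩ ↑S.sym2)).Nontrivial := by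
  obtain ⟨T, hST, hT, hinj⟩ := hc S hS
  have hcard := (Subgraph.isTree_coe_iff.mp hT).2
  have hq' : T.edgeSet.ncard ≤ q := by
    simpa using Set.ncard_le_ncard_of_injOn c (fun _ _ => Set.mem_univ _) hinj
  have hverts : T.verts = ↑S := by
    refine (Set.eq_of_subset_of_ncard_le hST ?_).symm
    rw [Set.ncard_coe_finset]; omega
  have hsub : T.edgeSet ⊆ G.edgeSet ∩ ↑S.sym2 := by
    intro e he
    refine ⟨T.edgeSet_subset he, ?_⟩
    induction e with
    | h x y =>
      rw [Finset.mem_coe, Finset.mk_mem_sym2_iff, ← Finset.mem_coe, ← Finset.mem_coe, ← hverts]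
      exact ⟨T.edge_vert he, T.edge_vert he.symm⟩
  have hT2 : T.edgeSet.Nontrivial := by
    rw [hverts, Set.ncard_coe_finset, hS] at hcard
    rw [← Set.one_lt_ncard_iff_nontrivial]; omega
  exact (hT2.image_of_injOn hinj).mono (Set.image_mono hsub)

end SimpleGraph

instance : DecidableRel wheel4.Adj := fun a b => by
  unfold wheel4; rw [SimpleGraph.fromEdgeSet_adj]; infer_instance

def wheel4Coloring : Sym2 (Fin 5) → Fin 3 := fun e =>
  if e = s(4, 0) ∨ e = s(4, 1) then 2
  else if e = s(0, 1) ∨ e = s(2, 3) ∨ e = s(4, 2) then 0 else 1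

theorem isRainbowColoring_wheel4Coloring : IsRainbowColoring wheel4 wheel4Coloring 3 := by
  intro S hS
  have hpath : ∃ a b d, S ⊆ {a, b, d} ∧ wheel4.Adj a b ∧ wheel4.Adj b d ∧ a ≠ d ∧
      wheel4Coloring s(a, b) ≠ wheel4Coloring s(b, d) := by
    revert S; decide
  obtain ⟨a, b, d, hS, hab, hbd, had, hc⟩ := hpath
  obtain ⟨T, hT, hTree, hinj⟩ := exists_rainbow_tree_of_adj_of_adj hab hbd had hc
  exact ⟨T, fun x hx => hT (by simpa using hS hx), hTree, hinj⟩

theorem not_isRainbowColoring_wheel4 {q : ℕ} (hq : q ≤ 2) (c : Sym2 (Fin 5) → Fin q) :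
    ¬ IsRainbowColoring wheel4 c 3 := by
  intro hc
  have not_mono (S : Finset (Fin 5)) (hS : S.card = 3) (t : Finset (Sym2 (Fin 5)))
      (ht : wheel4.edgeFinset ∩ S.sym2 ⊆ t) (e : Sym2 (Fin 5)) : ¬ ∀ e' ∈ t, c e' = c e := by
    intro hmono
    obtain ⟨_, ⟨e₁, he₁, rfl⟩, _, ⟨e₂, he₂, rfl⟩, hne⟩ :=
      hc.nontrivial_image_edgeSet_inter_sym2 hq hS
    have ht' : wheel4.edgeSet ∩ ↑S.sym2 ⊆ ↑t := by simpa [← Finset.coe_subset] using ht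
    exact hne ((hmono e₁ (ht' he₁)).trans (hmono e₂ (ht' he₂)).symm)
  have r₁ := not_mono {0, 1, 2} rfl {s(0, 1), s(1, 2)} (by decide) s(0, 1)
  have r₂ := not_mono {1, 2, 3} rfl {s(1, 2), s(2, 3)} (by decide) s(1, 2)
  have r₃ := not_mono {2, 3, 0} rfl {s(2, 3), s(3, 0)} (by decide) s(2, 3)
  have s₁ := not_mono {4, 0, 2} rfl {s(4, 0), s(4, 2)} (by decide) s(4, 0)
  have s₂ := not_mono {4, 1, 3} rfl {s(4, 1), s(4, 3)} (by decide) s(4, 1)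
  have t₁ := not_mono {4, 0, 1} rfl {s(0, 1), s(4, 0), s(4, 1)} (by decide) s(0, 1)
  have t₂ := not_mono {4, 1, 2} rfl {s(1, 2), s(4, 1), s(4, 2)} (by decide) s(1, 2)
  have t₃ := not_mono {4, 2, 3} rfl {s(2, 3), s(4, 2), s(4, 3)} (by decide) s(2, 3)
  have t₄ := not_mono {4, 3, 0} rfl {s(3, 0), s(4, 3), s(4, 0)} (by decide) s(3, 0)
  simp only [Finset.forall_mem_insert, Finset.mem_singleton, forall_eq, true_and]
    at r₁ r₂ r₃ s₁ s₂ t₁ t₂ t₃ t₄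
  -- The rim colours alternate and opposite spokes differ, so some hub triangle is monochromatic.
  omega

theorem stmt_18 : rxk wheel4 3 = 3 := by
  refine le_antisymm (Nat.sInf_le ⟨_, isRainbowColoring_wheel4Coloring⟩) ?_
  refine le_csInf ⟨3, _, isRainbowColoring_wheel4Coloring⟩ fun q ⟨c, hc⟩ => ?_
  by_contra! hq
  exact not_isRainbowColoring_wheel4 (by omega) c hc
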